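/- Fix λ > 0 and let i, j ∈ {0, 1, …, K_λ} with i < j. Then: (a) σ̂_j² ≤ σ̂_i² if and only if (1/(j−i)) · Σ_{k=i+1}^{j} d_k²(PY) ≥ λ σ̂_j²; (b) in particular (i = j−1), σ̂_j² ≤ σ̂_{j−1}² if and only if d_j²(PY) ≥ λ σ̂_j²; (c) d_j²(PY) ≤ λ σ̂_j² if and only if d_j²(PY) ≤ λ σ̂_{j−1}². -/

import Mathlib

open scoped BigOperators NNReal ENNReal
open Classical MeasureTheory ProbabilityTheory

noncomputable section

/-- Squared Frobenius (Hilbert–Schmidt) norm of a real matrix. -/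
def frob2 {n m : ℕ} (M : Matrix (Fin n) (Fin m) ℝ) : ℝ :=
  ∑ i, ∑ j, (M i j) ^ 2

theorem Matrix.isHermitian_transpose_mul_self {m n α : Type*} [Fintype m] [CommRing α]
    [StarRing α] [TrivialStar α] (A : Matrix m n α) : (A.transpose * A).IsHermitian := by
  simp [Matrix.IsHermitian]

/-- `sval M k` is the `k`-th largest singular value of `M` (1-based indexing),
i.e. the square root of the `k`-th largest eigenvalue of `Mᴴ * M`; by convention
it is `0` for `k = 0` and for `k > m`. -/
def sval {n m : ℕ} (M : Matrix (Fin n) (Fin m) ℝ) (k : ℕ) : ℝ :=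
  if h : 1 ≤ k ∧ k ≤ m then
    Real.sqrt ((Matrix.isHermitian_transpose_mul_self M).eigenvalues
      (Tuple.sort (Matrix.isHermitian_transpose_mul_self M).eigenvalues ⟨m - k, by omega⟩))
  else 0

/-- A best rank-`k` approximation of `M` in Frobenius norm (rank-`k` truncated SVD),
with the convention that the rank-`0` truncation is `0`. -/
def trunc {n m : ℕ} (M : Matrix (Fin n) (Fin m) ℝ) (k : ℕ) :
    Matrix (Fin n) (Fin m) ℝ :=
  if k = 0 then 0
  else Classical.epsilon fun B : Matrix (Fin n) (Fin m) ℝ =>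
    B.rank ≤ k ∧ ∀ C : Matrix (Fin n) (Fin m) ℝ, C.rank ≤ k → frob2 (M - B) ≤ frob2 (M - C)

/-- `K_λ = ⌊(nm-1)/λ⌋ ∧ q ∧ m`. -/
def Kfun (n m q : ℕ) (lam : ℝ) : ℕ :=
  min (min (Nat.floor ((((n * m : ℕ) : ℝ) - 1) / lam)) q) m

/-- `σ̂_k² = ‖Y - (PY)_k‖² / (nm - λ k)`. -/
def sighat2 {n m : ℕ} (Y : Matrix (Fin n) (Fin m) ℝ)
    (P : Matrix (Fin n) (Fin n) ℝ) (lam : ℝ) (k : ℕ) : ℝ :=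
  frob2 (Y - trunc (P * Y) k) / (((n * m : ℕ) : ℝ) - lam * k)

/-- The selected rank `k̂ = ∑_{k=1}^{K_λ} 1{d_k²(PY) ≥ λ σ̂_k²}`,
which minimizes `σ̂_k²` over `{0, 1, …, K_λ}`. -/
def khat {n m : ℕ} (Y : Matrix (Fin n) (Fin m) ℝ)
    (P : Matrix (Fin n) (Fin n) ℝ) (q : ℕ) (lam : ℝ) : ℕ :=
  ∑ k ∈ Finset.Icc 1 (Kfun n m q lam),
    if lam * sighat2 Y P lam k ≤ (sval (P * Y) k) ^ 2 then 1 else 0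

/-!
By the Eckart–Young theorem, `‖M - (M)_k‖²` is the sum of the `m - k` smallest eigenvalues of
`Mᵀ M`, i.e. `∑_{l > k} d_l(M)²`. The lower bound projects a competitor `M - C`, `rank C ≤ k`,
onto the kernel of `C`: that projection has trace `≥ m - k`, its diagonal entries in the
eigenbasis of `Mᵀ M` lie in `[0, 1]`, and a bathtub estimate finishes. The upper bound truncates
`M` onto the eigenvectors of the `k` largest eigenvalues.

A best rank-`k` approximation of `PY` lies in the range of `P`, so by Pythagoras
`‖Y - (PY)_k‖² = ‖Y - PY‖² + ∑_{l > k} d_l(PY)²`. Hence, with `D = nm - λj > 0` for `j ≤ K_λ`,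
`σ̂_j² = a / D` and `σ̂_i² = (a + ∑_{i < k ≤ j} d_k²) / (D + λ(j - i))`, and each equivalence is
a cross-multiplication.
-/
open Matrix Finset

section Frobenius

variable {n m : ℕ}

lemma frob2_nonneg (M : Matrix (Fin n) (Fin m) ℝ) : 0 ≤ frob2 M := by
  unfold frob2; positivity

lemma eq_zero_of_frob2_eq_zero {M : Matrix (Fin n) (Fin m) ℝ} (h : frob2 M = 0) : M = 0 := by
  ext i j
  have hrow := (sum_eq_zero_iff_of_nonneg fun i _ => by positivity).mp h i (mem_univ i)
  have hij := (sum_eq_zero_iff_of_nonneg fun j _ => sq_nonneg (M i j)).mp hrow j (mem_univ j)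
  simpa using hij

lemma frob2_transpose (M : Matrix (Fin n) (Fin m) ℝ) : frob2 Mᵀ = frob2 M :=
  sum_comm

lemma frob2_eq_trace (M : Matrix (Fin n) (Fin m) ℝ) : frob2 M = (Mᵀ * M).trace := by
  simp only [frob2, trace, Matrix.diag, mul_apply, transpose_apply, sq]
  exact sum_comm

lemma frob2_eq_sum_eigenvalues (M : Matrix (Fin n) (Fin m) ℝ) :
    frob2 M = ∑ i, (isHermitian_transpose_mul_self M).eigenvalues i := by
  rw [frob2_eq_trace, (isHermitian_transpose_mul_self M).trace_eq_sum_eigenvalues]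
  rfl

lemma frob2_mul_proj (M : Matrix (Fin n) (Fin m) ℝ) {Q : Matrix (Fin m) (Fin m) ℝ}
    (hQ2 : Q * Q = Q) (hQt : Qᵀ = Q) : frob2 (M * Q) = (Mᵀ * M * Q).trace := by
  rw [frob2_eq_trace, transpose_mul, hQt, Matrix.mul_assoc, trace_mul_comm, Matrix.mul_assoc,
    Matrix.mul_assoc, hQ2, ← Matrix.mul_assoc]

lemma frob2_eq_mul_proj_add (M : Matrix (Fin n) (Fin m) ℝ) {Q : Matrix (Fin m) (Fin m) ℝ}
    (hQ2 : Q * Q = Q) (hQt : Qᵀ = Q) : frob2 M = frob2 (M * Q) + frob2 (M - M * Q) := by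
  have hQ2' : (1 - Q) * (1 - Q) = 1 - Q := by
    rw [Matrix.sub_mul, Matrix.mul_sub, Matrix.mul_sub, hQ2]; simp
  have hQt' : (1 - Q)ᵀ = 1 - Q := by rw [transpose_sub, transpose_one, hQt]
  rw [show M - M * Q = M * (1 - Q) by rw [Matrix.mul_sub, Matrix.mul_one],
    frob2_mul_proj M hQ2' hQt', frob2_mul_proj M hQ2 hQt, frob2_eq_trace, Matrix.mul_sub,
    Matrix.mul_one, trace_sub]
  ring

lemma frob2_eq_proj_mul_add (M : Matrix (Fin n) (Fin m) ℝ) {P : Matrix (Fin n) (Fin n) ℝ}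
    (hP2 : P * P = P) (hPt : Pᵀ = P) : frob2 M = frob2 (P * M) + frob2 (M - P * M) := by
  have h := frob2_eq_mul_proj_add Mᵀ hP2 hPt
  rwa [show Mᵀ * P = (P * M)ᵀ by rw [transpose_mul, hPt], ← transpose_sub, frob2_transpose,
    frob2_transpose, frob2_transpose] at h

end Frobenius

section OrthogonalConj

variable {ι : Type*} [Fintype ι] [DecidableEq ι] {V : Matrix ι ι ℝ}

lemma transpose_conj_diagonal (a : ι → ℝ) : (V * diagonal a * Vᵀ)ᵀ = V * diagonal a * Vᵀ := by
  simp only [transpose_mul, transpose_transpose, diagonal_transpose, Matrix.mul_assoc]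

lemma conj_diagonal_mul_conj_diagonal (hV : Vᵀ * V = 1) (a b : ι → ℝ) :
    V * diagonal a * Vᵀ * (V * diagonal b * Vᵀ) = V * diagonal (a * b) * Vᵀ := by
  rw [show V * diagonal a * Vᵀ * (V * diagonal b * Vᵀ)
      = V * (diagonal a * (Vᵀ * V) * diagonal b) * Vᵀ by simp only [Matrix.mul_assoc],
    hV, Matrix.mul_one, diagonal_mul_diagonal]
  rfl

lemma trace_conj_diagonal (hV : Vᵀ * V = 1) (a : ι → ℝ) :
    (V * diagonal a * Vᵀ).trace = ∑ i, a i := by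
  rw [trace_mul_cycle, hV, Matrix.one_mul, trace_diagonal]

lemma trace_conj_diagonal_mul (a : ι → ℝ) (Q : Matrix ι ι ℝ) :
    (V * diagonal a * Vᵀ * Q).trace = ∑ i, a i * (Vᵀ * Q * V) i i := by
  rw [Matrix.mul_assoc, trace_mul_comm, ← Matrix.mul_assoc]
  simp [trace, mul_comm]

lemma rank_conj_diagonal_le (a : ι → ℝ) : (V * diagonal a * Vᵀ).rank ≤ #{i | a i ≠ 0} :=
  calc _ ≤ (V * diagonal a).rank := rank_mul_le_left _ _
    _ ≤ (diagonal a).rank := rank_mul_le_right _ _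
    _ = _ := by rw [rank_diagonal, Fintype.card_subtype]

end OrthogonalConj

namespace Matrix.IsHermitian

variable {ι : Type*} [Fintype ι] [DecidableEq ι] {S : Matrix ι ι ℝ} (hS : S.IsHermitian)

lemma transpose_eigenvectorUnitary_mul :
    (hS.eigenvectorUnitary : Matrix ι ι ℝ)ᵀ * hS.eigenvectorUnitary = 1 := by
  simpa [star_eq_conjTranspose] using (mem_unitaryGroup_iff'.mp hS.eigenvectorUnitary.2)

lemma eq_conj_diagonal_eigenvalues :
    S = (hS.eigenvectorUnitary : Matrix ι ι ℝ) * diagonal hS.eigenvalues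
      * (hS.eigenvectorUnitary : Matrix ι ι ℝ)ᵀ := by
  simpa [star_eq_conjTranspose] using hS.spectral_theorem

def eigenProj (s : Finset ι) : Matrix ι ι ℝ :=
  (hS.eigenvectorUnitary : Matrix ι ι ℝ) * diagonal (fun i => if i ∈ s then 1 else 0)
    * (hS.eigenvectorUnitary : Matrix ι ι ℝ)ᵀ

variable (s : Finset ι)

lemma eigenProj_mul_self : hS.eigenProj s * hS.eigenProj s = hS.eigenProj s := by
  rw [eigenProj, conj_diagonal_mul_conj_diagonal hS.transpose_eigenvectorUnitary_mul]
  congr 3 with i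
  by_cases hi : i ∈ s <;> simp [hi]

lemma transpose_eigenProj : (hS.eigenProj s)ᵀ = hS.eigenProj s :=
  transpose_conj_diagonal _

lemma rank_eigenProj_le : (hS.eigenProj s).rank ≤ #s :=
  (rank_conj_diagonal_le _).trans_eq (by congr 1; ext i; simp)

lemma trace_eigenProj : (hS.eigenProj s).trace = #s := by
  rw [eigenProj, trace_conj_diagonal hS.transpose_eigenvectorUnitary_mul, sum_boole]; simp

lemma trace_mul_eigenProj : (S * hS.eigenProj s).trace = ∑ i ∈ s, hS.eigenvalues i := by
  rw [congrArg (· * hS.eigenProj s) hS.eq_conj_diagonal_eigenvalues, eigenProj,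
    conj_diagonal_mul_conj_diagonal hS.transpose_eigenvectorUnitary_mul,
    trace_conj_diagonal hS.transpose_eigenvectorUnitary_mul]
  simp

end Matrix.IsHermitian

lemma diag_mem_Icc_of_proj {ι : Type*} [Fintype ι] {Q : Matrix ι ι ℝ} (hQ2 : Q * Q = Q)
    (hQt : Qᵀ = Q) (i : ι) : 0 ≤ Q i i ∧ Q i i ≤ 1 := by
  have hrow : Q i i = ∑ j, Q i j ^ 2 := by
    conv_lhs => rw [← hQ2]
    simp only [mul_apply, sq]
    refine sum_congr rfl fun j _ => ?_
    rw [← transpose_apply Q i j, hQt]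
  have hsq : Q i i ^ 2 ≤ Q i i := hrow ▸ single_le_sum (f := fun j => Q i j ^ 2)
    (fun _ _ => sq_nonneg _) (mem_univ i)
  have h0 : 0 ≤ Q i i := hrow ▸ by positivity
  exact ⟨h0, by nlinarith⟩

lemma sum_lt_le_sum_mul_of_monotone {m r : ℕ} {b c : Fin m → ℝ} (hb : Monotone b)
    (hb0 : ∀ i, 0 ≤ b i) (hc0 : ∀ i, 0 ≤ c i) (hc1 : ∀ i, c i ≤ 1) (hrm : r ≤ m)
    (hr : (r : ℝ) ≤ ∑ i, c i) : ∑ i : Fin m with i.val < r, b i ≤ ∑ i, b i * c i := by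
  rcases Nat.eq_zero_or_pos r with rfl | hr0
  · simpa using sum_nonneg fun i _ => mul_nonneg (hb0 i) (hc0 i)
  -- `t`, the largest of the `r` smallest values, separates them from the others
  set t := b ⟨r - 1, by omega⟩
  have hpt : ∀ i : Fin m, (if i.val < r then b i else 0)
      ≤ b i * c i - t * c i + if i.val < r then t else 0 := by
    intro i
    split_ifs with hi
    · have : b i ≤ t := hb (Fin.mk_le_mk.mpr (by omega))
      nlinarith [hc0 i, hc1 i]
    · have : t ≤ b i := hb (Fin.mk_le_mk.mpr (by omega))
      nlinarith [hc0 i]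
  have hcard : ∑ i : Fin m, (if i.val < r then t else 0) = r * t := by
    rw [← sum_filter, sum_const, Fin.card_filter_val_lt, min_eq_right hrm, nsmul_eq_mul]
  rw [sum_filter]
  calc _ ≤ ∑ i, (b i * c i - t * c i + if i.val < r then t else 0) := sum_le_sum fun i _ => hpt i
    _ = ∑ i, b i * c i - t * ∑ i, c i + r * t := by
      rw [sum_add_distrib, sum_sub_distrib, mul_sum, hcard]
    _ ≤ ∑ i, b i * c i := by nlinarith [hb0 ⟨r - 1, by omega⟩]

lemma exists_proj_mul_eq_zero {n m : ℕ} (C : Matrix (Fin n) (Fin m) ℝ) :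
    ∃ Q : Matrix (Fin m) (Fin m) ℝ, Q * Q = Q ∧ Qᵀ = Q ∧ C * Q = 0 ∧ Q.trace = m - C.rank := by
  set hT := isHermitian_transpose_mul_self C
  set s : Finset (Fin m) := {i | hT.eigenvalues i = 0}
  refine ⟨hT.eigenProj s, hT.eigenProj_mul_self s, hT.transpose_eigenProj s, ?_, ?_⟩
  · apply eq_zero_of_frob2_eq_zero
    rw [frob2_mul_proj C (hT.eigenProj_mul_self s) (hT.transpose_eigenProj s),
      hT.trace_mul_eigenProj]
    exact sum_eq_zero fun i hi => (mem_filter.mp hi).2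
  · have hcard := card_filter_add_card_filter_not (s := univ)
      (p := fun i => hT.eigenvalues i = 0)
    rw [card_univ, Fintype.card_fin] at hcard
    rw [hT.trace_eigenProj, ← rank_transpose_mul_self C, hT.rank_eq_card_non_zero_eigs,
      Fintype.card_subtype, eq_sub_iff_add_eq]
    exact_mod_cast hcard

namespace Matrix.IsHermitian

variable {m : ℕ} {S : Matrix (Fin m) (Fin m) ℝ} (hS : S.IsHermitian)

def sortedEigenvalues : Fin m → ℝ := hS.eigenvalues ∘ Tuple.sort hS.eigenvalues

lemma monotone_sortedEigenvalues : Monotone hS.sortedEigenvalues := Tuple.monotone_sort _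

lemma sum_sortedEigenvalues_le_trace_mul_proj (hS0 : ∀ i, 0 ≤ hS.eigenvalues i)
    {Q : Matrix (Fin m) (Fin m) ℝ} (hQ2 : Q * Q = Q) (hQt : Qᵀ = Q) {r : ℕ} (hrm : r ≤ m)
    (hr : (r : ℝ) ≤ Q.trace) :
    ∑ l : Fin m with l.val < r, hS.sortedEigenvalues l ≤ (S * Q).trace := by
  set V := (hS.eigenvectorUnitary : Matrix (Fin m) (Fin m) ℝ)
  set W := Vᵀ * Q * V
  have hVV : V * Vᵀ = 1 := mul_eq_one_comm.mp hS.transpose_eigenvectorUnitary_mul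
  have hW2 : W * W = W := by
    simp only [W, Matrix.mul_assoc]
    rw [← Matrix.mul_assoc V, hVV, Matrix.one_mul, ← Matrix.mul_assoc Q, hQ2]
  have hWt : Wᵀ = W := by simp only [W, transpose_mul, transpose_transpose, hQt, Matrix.mul_assoc]
  have hWtr : W.trace = Q.trace := by rw [trace_mul_cycle, hVV, Matrix.one_mul]
  set σ := Tuple.sort hS.eigenvalues
  have htrace : (S * Q).trace = ∑ l, hS.sortedEigenvalues l * W (σ l) (σ l) := by
    rw [congrArg (· * Q) hS.eq_conj_diagonal_eigenvalues, trace_conj_diagonal_mul]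
    exact (Equiv.sum_comp σ fun i => hS.eigenvalues i * W i i).symm
  rw [htrace]
  refine sum_lt_le_sum_mul_of_monotone hS.monotone_sortedEigenvalues (fun l => hS0 _)
    (fun l => (diag_mem_Icc_of_proj hW2 hWt _).1) (fun l => (diag_mem_Icc_of_proj hW2 hWt _).2)
    hrm ?_
  rw [Equiv.sum_comp σ fun i => W i i]
  exact hr.trans_eq hWtr.symm

end Matrix.IsHermitian

section EckartYoung

variable {n m : ℕ} (M : Matrix (Fin n) (Fin m) ℝ) {k : ℕ}

lemma eigenvalues_transpose_mul_self_nonneg (i : Fin m) :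
    0 ≤ (isHermitian_transpose_mul_self M).eigenvalues i := by
  have hM := posSemidef_conjTranspose_mul_self M
  rw [conjTranspose_eq_transpose_of_trivial] at hM
  exact hM.eigenvalues_nonneg i

lemma sval_sq {l : ℕ} (hl : 1 ≤ l) (hlm : l ≤ m) :
    sval M l ^ 2 = (isHermitian_transpose_mul_self M).sortedEigenvalues ⟨m - l, by omega⟩ := by
  rw [sval, dif_pos ⟨hl, hlm⟩, Real.sq_sqrt (eigenvalues_transpose_mul_self_nonneg M _)]
  rfl

lemma sum_Ioc_sval_sq (hk : k ≤ m) :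
    ∑ l ∈ Ioc k m, sval M l ^ 2
      = ∑ i : Fin m with i.val < m - k, (isHermitian_transpose_mul_self M).sortedEigenvalues i := by
  symm
  refine sum_bij' (fun i _ => m - i) (fun l hl => ⟨m - l, by rw [mem_Ioc] at hl; omega⟩)
    ?_ ?_ ?_ ?_ ?_ <;> simp only [mem_filter, mem_univ, true_and, mem_Ioc]
  · intro i hi; omega
  · intro l hl; omega
  · intro i _; ext; simp only; omega
  · intro l hl; omega
  · intro i _
    rw [sval_sq M (by omega) (by omega)]
    congr; ext; simp only; omega

lemma sum_Ioc_sval_sq_le_frob2_sub (hk : k ≤ m) {C : Matrix (Fin n) (Fin m) ℝ}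
    (hC : C.rank ≤ k) : ∑ l ∈ Ioc k m, sval M l ^ 2 ≤ frob2 (M - C) := by
  obtain ⟨Q, hQ2, hQt, hCQ, hQtr⟩ := exists_proj_mul_eq_zero C
  have hkerdim : ((m - k : ℕ) : ℝ) ≤ Q.trace := by
    rw [hQtr, Nat.cast_sub hk]
    gcongr
  rw [sum_Ioc_sval_sq M hk]
  calc _ ≤ (Mᵀ * M * Q).trace :=
        (isHermitian_transpose_mul_self M).sum_sortedEigenvalues_le_trace_mul_proj
          (eigenvalues_transpose_mul_self_nonneg M) hQ2 hQt (by omega) hkerdim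
    _ = frob2 ((M - C) * Q) := by rw [Matrix.sub_mul, hCQ, sub_zero, frob2_mul_proj M hQ2 hQt]
    _ ≤ frob2 (M - C) := by
      rw [frob2_eq_mul_proj_add (M - C) hQ2 hQt]
      linarith [frob2_nonneg (M - C - (M - C) * Q)]

lemma exists_rank_le_frob2_sub_eq (hk : k ≤ m) :
    ∃ B : Matrix (Fin n) (Fin m) ℝ, B.rank ≤ k ∧ frob2 (M - B) = ∑ l ∈ Ioc k m, sval M l ^ 2 := by
  set hM := isHermitian_transpose_mul_self M
  set σ := Tuple.sort hM.eigenvalues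
  -- project onto the eigenvectors of the `k` largest eigenvalues of `Mᵀ * M`
  set top : Finset (Fin m) := ({l : Fin m | ¬ l.val < m - k} : Finset (Fin m)).map σ.toEmbedding
  have hQ2 := hM.eigenProj_mul_self top
  have hQt := hM.transpose_eigenProj top
  refine ⟨M * hM.eigenProj top, ?_, ?_⟩
  · have hcard := card_filter_add_card_filter_not (s := univ) (p := fun l : Fin m => l.val < m - k)
    rw [Fin.card_filter_val_lt, card_univ, Fintype.card_fin] at hcard
    calc _ ≤ (hM.eigenProj top).rank := rank_mul_le_right _ _
      _ ≤ #top := hM.rank_eigenProj_le _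
      _ ≤ k := by rw [card_map]; omega
  · have hsplit := frob2_eq_mul_proj_add M hQ2 hQt
    rw [frob2_mul_proj M hQ2 hQt, hM.trace_mul_eigenProj, sum_map, frob2_eq_sum_eigenvalues,
      ← Equiv.sum_comp σ, ← sum_filter_add_sum_filter_not univ (fun l : Fin m => l.val < m - k)]
      at hsplit
    rw [sum_Ioc_sval_sq M hk]
    simp only [IsHermitian.sortedEigenvalues, Function.comp_apply, Equiv.coe_toEmbedding]
      at hsplit ⊢
    linarith

lemma trunc_spec (hk : k ≤ m) :
    (trunc M k).rank ≤ k ∧ frob2 (M - trunc M k) = ∑ l ∈ Ioc k m, sval M l ^ 2 := by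
  rcases eq_or_ne k 0 with rfl | hk0
  · have htrunc : trunc M 0 = 0 := if_pos rfl
    refine ⟨by simp [htrunc], ?_⟩
    rw [htrunc, sub_zero, sum_Ioc_sval_sq M hk, frob2_eq_sum_eigenvalues,
      ← Equiv.sum_comp (Tuple.sort (isHermitian_transpose_mul_self M).eigenvalues)]
    simp [IsHermitian.sortedEigenvalues]
  · obtain ⟨B, hB, hBeq⟩ := exists_rank_le_frob2_sub_eq M hk
    have hex : ∃ B : Matrix (Fin n) (Fin m) ℝ, B.rank ≤ k ∧ ∀ C : Matrix (Fin n) (Fin m) ℝ,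
        C.rank ≤ k → frob2 (M - B) ≤ frob2 (M - C) :=
      ⟨B, hB, fun C hC => hBeq ▸ sum_Ioc_sval_sq_le_frob2_sub M hk hC⟩
    have hbest : (trunc M k).rank ≤ k ∧ ∀ C : Matrix (Fin n) (Fin m) ℝ, C.rank ≤ k →
        frob2 (M - trunc M k) ≤ frob2 (M - C) := by
      rw [trunc, if_neg hk0]
      exact Classical.epsilon_spec hex
    exact ⟨hbest.1, le_antisymm (hBeq ▸ hbest.2 B hB)
      (sum_Ioc_sval_sq_le_frob2_sub M hk hbest.1)⟩

end EckartYoung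

section Projection

variable {n m : ℕ} (Y : Matrix (Fin n) (Fin m) ℝ) {P : Matrix (Fin n) (Fin n) ℝ} {k : ℕ}

lemma proj_mul_trunc_proj_mul (hP2 : P * P = P) (hPt : Pᵀ = P) (hk : k ≤ m) :
    P * trunc (P * Y) k = trunc (P * Y) k := by
  obtain ⟨hrank, hval⟩ := trunc_spec (P * Y) hk
  set T := trunc (P * Y) k
  have hsplit := frob2_eq_proj_mul_add (P * Y - T) hP2 hPt
  rw [Matrix.mul_sub, ← Matrix.mul_assoc, hP2, sub_sub_sub_cancel_left] at hsplit
  have hlow := sum_Ioc_sval_sq_le_frob2_sub (P * Y) hk ((rank_mul_le_right P T).trans hrank)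
  have hzero : frob2 (P * T - T) = 0 := by linarith [frob2_nonneg (P * T - T)]
  exact sub_eq_zero.mp (eq_zero_of_frob2_eq_zero hzero)

lemma frob2_sub_trunc_proj_mul (hP2 : P * P = P) (hPt : Pᵀ = P) (hk : k ≤ m) :
    frob2 (Y - trunc (P * Y) k) = frob2 (Y - P * Y) + ∑ l ∈ Ioc k m, sval (P * Y) l ^ 2 := by
  have hsplit := frob2_eq_proj_mul_add (Y - trunc (P * Y) k) hP2 hPt
  rw [Matrix.mul_sub, proj_mul_trunc_proj_mul Y hP2 hPt hk, sub_sub_sub_cancel_right] at hsplit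
  rw [hsplit, (trunc_spec _ hk).2, add_comm]

lemma sighat2_eq_of_le (hP2 : P * P = P) (hPt : Pᵀ = P) (lam : ℝ) {i j : ℕ} (hij : i ≤ j)
    (hjm : j ≤ m) :
    sighat2 Y P lam i =
      (frob2 (Y - P * Y) + ∑ l ∈ Ioc j m, sval (P * Y) l ^ 2
          + ∑ l ∈ Icc (i + 1) j, sval (P * Y) l ^ 2)
        / ((n * m : ℕ) - lam * j + lam * ((j : ℝ) - i)) := by
  rw [sighat2, frob2_sub_trunc_proj_mul Y hP2 hPt (hij.trans hjm),
    ← sum_Ioc_consecutive _ hij hjm, Icc_add_one_left_eq_Ioc]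
  congr 1 <;> ring

end Projection

lemma le_of_le_Kfun {n m q j : ℕ} {lam : ℝ} (hjK : j ≤ Kfun n m q lam) : j ≤ m :=
  hjK.trans (min_le_right _ _)

lemma mul_lt_of_le_Kfun {n m q j : ℕ} {lam : ℝ} (hlam : 0 < lam) (hj : j ≠ 0)
    (hjK : j ≤ Kfun n m q lam) : lam * j < (n * m : ℕ) := by
  have hfloor := (Nat.le_floor_iff' hj).mp (hjK.trans ((min_le_left _ _).trans (min_le_left _ _)))
  rw [le_div_iff₀ hlam] at hfloor
  linarith

lemma div_le_add_div_add_iff {a s D d lam : ℝ} (hD : 0 < D) (hd : 0 < d) (hlam : 0 < lam) :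
    a / D ≤ (a + s) / (D + lam * d) ↔ lam * (a / D) ≤ s / d := by
  rw [div_le_div_iff₀ hD (by positivity), mul_div_assoc', div_le_div_iff₀ hD hd]
  constructor <;> intro h <;> linarith

lemma le_mul_div_iff_le_mul_add_div {a e D lam : ℝ} (hD : 0 < D) (hlam : 0 < lam) :
    e ≤ lam * (a / D) ↔ e ≤ lam * ((a + e) / (D + lam)) := by
  rw [mul_div_assoc', mul_div_assoc', le_div_iff₀ hD, le_div_iff₀ (by positivity)]
  constructor <;> intro h <;> linarith

theorem statement_0_general
    {n m q : ℕ}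
    (Y : Matrix (Fin n) (Fin m) ℝ)
    (P : Matrix (Fin n) (Fin n) ℝ)
    (hP2 : P * P = P) (hPt : P.transpose = P)
    (lam : ℝ) (hlam : 0 < lam)
    (i j : ℕ) (hij : i < j) (hjK : j ≤ Kfun n m q lam) :
    (sighat2 Y P lam j ≤ sighat2 Y P lam i ↔
      lam * sighat2 Y P lam j ≤
        (∑ k ∈ Finset.Icc (i + 1) j, (sval (P * Y) k) ^ 2) / ((j : ℝ) - i)) ∧
    (sighat2 Y P lam j ≤ sighat2 Y P lam (j - 1) ↔
      lam * sighat2 Y P lam j ≤ (sval (P * Y) j) ^ 2) ∧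
    ((sval (P * Y) j) ^ 2 ≤ lam * sighat2 Y P lam j ↔
      (sval (P * Y) j) ^ 2 ≤ lam * sighat2 Y P lam (j - 1)) := by
  have hjm := le_of_le_Kfun hjK
  have hD : 0 < ((n * m : ℕ) : ℝ) - lam * j := sub_pos.mpr (mul_lt_of_le_Kfun hlam (by omega) hjK)
  have hσj := sighat2_eq_of_le Y hP2 hPt lam le_rfl hjm
  have hσi := sighat2_eq_of_le Y hP2 hPt lam hij.le hjm
  have hσj1 := sighat2_eq_of_le Y hP2 hPt lam (Nat.sub_le j 1) hjm
  rw [Icc_eq_empty_of_lt (Nat.lt_succ_self j), sum_empty, add_zero, sub_self, mul_zero,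
    add_zero] at hσj
  rw [Nat.sub_add_cancel (by omega), Icc_self, sum_singleton, Nat.cast_sub (by omega),
    Nat.cast_one, sub_sub_cancel, mul_one] at hσj1
  refine ⟨?_, ?_, ?_⟩
  · rw [hσj, hσi]
    exact div_le_add_div_add_iff hD (sub_pos.mpr (by exact_mod_cast hij)) hlam
  · rw [hσj, hσj1]
    simpa using div_le_add_div_add_iff (s := sval (P * Y) j ^ 2) hD one_pos hlam
  · rw [hσj, hσj1]
    exact le_mul_div_iff_le_mul_add_div hD hlam

theorem statement_0
    {n m p q : ℕ}
    (X : Matrix (Fin n) (Fin p) ℝ) (A : Matrix (Fin p) (Fin m) ℝ)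
    (E Y : Matrix (Fin n) (Fin m) ℝ)
    (P : Matrix (Fin n) (Fin n) ℝ)
    (hY : Y = X * A + E)
    (hP2 : P * P = P) (hPt : P.transpose = P) (hPX : P * X = X)
    (hq : X.rank = q) (hPq : P.rank = q)
    (lam : ℝ) (hlam : 0 < lam)
    (i j : ℕ) (hij : i < j) (hjK : j ≤ Kfun n m q lam) :
    (sighat2 Y P lam j ≤ sighat2 Y P lam i ↔
      lam * sighat2 Y P lam j ≤
        (∑ k ∈ Finset.Icc (i + 1) j, (sval (P * Y) k) ^ 2) / ((j : ℝ) - i)) ∧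
    (sighat2 Y P lam j ≤ sighat2 Y P lam (j - 1) ↔
      lam * sighat2 Y P lam j ≤ (sval (P * Y) j) ^ 2) ∧
    ((sval (P * Y) j) ^ 2 ≤ lam * sighat2 Y P lam j ↔
      (sval (P * Y) j) ^ 2 ≤ lam * sighat2 Y P lam (j - 1)) :=
  statement_0_general Y P hP2 hPt lam hlam i j hij hjK

end
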